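/- Let s = a + ib with a > 0 and b real, let c be a complex constant, and let M ≥ 0 be a real constant. Let f ∈ 𝒜 with f'(z) ≠ 0 for all z in 𝔻 and f(z) ≠ 0 for all z ∈ 𝔻 \ {0}. If for all z ∈ 𝔻 \ {0} one has |c|z|² + s − a(1−|z|²)·[s(1 + z f''(z)/f'(z)) + (1−s)·z f'(z)/f(z)]| ≤ M, then |c + s| ≤ M. -/

import Mathlib

/-!
Write `f z / z` as `dslope f 0 z`; then
`H z = s (1 + z f''(z)/f'(z)) + (1 - s) f'(z)/(dslope f 0 z)` is holomorphic on `𝔻`, agrees with the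
bracket of the hypothesis off `0`, and `H 0 = 1`. For `0 < r < 1` the function
`z ↦ c r² + s - a (1 - r²) H z` is bounded by `M` on `|z| = r`, so by the maximum modulus principle
also at `0`: `‖c r² + s - a (1 - r²)‖ ≤ M`. Letting `r → 1` gives `‖c + s‖ ≤ M`.
-/

open Metric Set

theorem dslope_ne_zero {𝕜 E : Type*} [NontriviallyNormedField 𝕜] [NormedAddCommGroup E]
    [NormedSpace 𝕜 E] {f : 𝕜 → E} {a z : 𝕜} (ha : deriv f a ≠ 0) (hz : z ≠ a → f z ≠ f a) :
    dslope f a z ≠ 0 := by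
  rcases eq_or_ne z a with rfl | hza
  · rwa [dslope_same]
  · rw [dslope_of_ne _ hza, slope_def_module]
    exact smul_ne_zero (inv_ne_zero (sub_ne_zero.2 hza)) (sub_ne_zero.2 (hz hza))

theorem Complex.norm_le_of_forall_mem_sphere_norm_le {F : Type*} [NormedAddCommGroup F]
    [NormedSpace ℂ F] {g : ℂ → F} {w : ℂ} {r M : ℝ} (hr : 0 < r)
    (hg : DifferentiableOn ℂ g (closedBall w r)) (hM : ∀ z ∈ sphere w r, ‖g z‖ ≤ M) :
    ‖g w‖ ≤ M := by
  have hcl : closure (ball w r) = closedBall w r := closure_ball w hr.ne'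
  refine Complex.norm_le_of_forall_mem_frontier_norm_le (isBounded_ball (x := w) (r := r)) ?_ ?_ ?_
  · exact DifferentiableOn.diffContOnCl (hcl ▸ hg)
  · rwa [frontier_ball w hr.ne']
  · exact hcl ▸ mem_closedBall_self hr.le

/-- `s (1 + z f''/f') + (1 - s) z f'/f` with its removable singularity at `0` removed. -/
noncomputable def ruscheweyhExpr (s : ℂ) (f : ℂ → ℂ) (z : ℂ) : ℂ :=
  s * (1 + z * deriv (deriv f) z / deriv f z) + (1 - s) * (deriv f z / dslope f 0 z)

section ruscheweyhExpr

variable {s : ℂ} {f : ℂ → ℂ}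

theorem ruscheweyhExpr_zero (hf'0 : deriv f 0 = 1) : ruscheweyhExpr s f 0 = 1 := by
  simp [ruscheweyhExpr, hf'0]

theorem ruscheweyhExpr_of_ne_zero (hf0 : f 0 = 0) {z : ℂ} (hz : z ≠ 0) :
    ruscheweyhExpr s f z =
      s * (1 + z * deriv (deriv f) z / deriv f z) + (1 - s) * (z * deriv f z / f z) := by
  rw [ruscheweyhExpr, dslope_of_ne _ hz, slope_def_field, hf0, sub_zero, sub_zero,
    div_div_eq_mul_div, mul_comm (deriv f z)]

theorem differentiableOn_ruscheweyhExpr {U : Set ℂ} (hU : IsOpen U) (h0 : 0 ∈ U)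
    (hf : AnalyticOnNhd ℂ f U) (hf0 : f 0 = 0) (hf' : ∀ z ∈ U, deriv f z ≠ 0)
    (hfz : ∀ z ∈ U \ {0}, f z ≠ 0) :
    DifferentiableOn ℂ (ruscheweyhExpr s f) U := by
  have hg : DifferentiableOn ℂ (dslope f 0) U :=
    (Complex.differentiableOn_dslope (hU.mem_nhds h0)).2 hf.differentiableOn
  have hg_ne : ∀ z ∈ U, dslope f 0 z ≠ 0 := fun z hz =>
    dslope_ne_zero (hf' 0 h0) fun hz0 => by rw [hf0]; exact hfz z ⟨hz, hz0⟩
  have hf'd := hf.deriv.differentiableOn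
  have hf''d := hf.deriv.deriv.differentiableOn
  unfold ruscheweyhExpr
  refine (((differentiableOn_id.mul hf''d).div hf'd hf').const_add 1).const_mul s |>.add ?_
  exact (hf'd.div hg hg_ne).const_mul _

end ruscheweyhExpr

theorem ruscheweyh_inequality_at_boundary_general
    (a : ℝ)
    (c s : ℂ)
    (M : ℝ)
    (f : ℂ → ℂ)
    (hf : AnalyticOnNhd ℂ f (ball 0 1)) (hf0 : f 0 = 0) (hf'0 : deriv f 0 = 1)
    (hf' : ∀ z ∈ ball (0 : ℂ) 1, deriv f z ≠ 0)
    (hfz : ∀ z ∈ ball (0 : ℂ) 1 \ {0}, f z ≠ 0)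
    (hineq : ∀ z ∈ ball (0 : ℂ) 1 \ {0},
      ‖c * (‖z‖ : ℂ) ^ 2 + s
        - (a : ℂ) * (1 - (‖z‖ : ℂ) ^ 2) *
          (s * (1 + z * deriv (deriv f) z / deriv f z)
            + (1 - s) * (z * deriv f z / f z))‖ ≤ M) :
    ‖c + s‖ ≤ M := by
  have hH : DifferentiableOn ℂ (ruscheweyhExpr s f) (ball 0 1) :=
    differentiableOn_ruscheweyhExpr isOpen_ball (mem_ball_self one_pos) hf hf0 hf' hfz
  have hr : ∀ r ∈ Ioo (0 : ℝ) 1, ‖c * (r : ℂ) ^ 2 + s - a * (1 - (r : ℂ) ^ 2)‖ ≤ M := by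
    rintro r ⟨hr0, hr1⟩
    have hsub : closedBall (0 : ℂ) r ⊆ ball 0 1 := closedBall_subset_ball hr1
    have := Complex.norm_le_of_forall_mem_sphere_norm_le hr0
      (g := fun z => c * (r : ℂ) ^ 2 + s - a * (1 - (r : ℂ) ^ 2) * ruscheweyhExpr s f z)
      (((hH.mono hsub).const_mul _).const_sub _) fun z hz => by
        have hzr : ‖z‖ = r := by simpa using hz
        have hz0 : z ≠ 0 := by rintro rfl; simp [hr0.ne] at hzr
        rw [ruscheweyhExpr_of_ne_zero hf0 hz0, ← hzr]
        exact hineq z ⟨sphere_subset_closedBall.trans hsub hz, hz0⟩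
    simpa [ruscheweyhExpr_zero hf'0] using this
  have hcont : Continuous fun r : ℝ => ‖c * (r : ℂ) ^ 2 + s - a * (1 - (r : ℂ) ^ 2)‖ := by fun_prop
  have h1 : (1 : ℝ) ∈ closure (Ioo 0 1) := by simp [closure_Ioo zero_ne_one]
  simpa using hcont.continuousWithinAt.closure_le h1 continuousWithinAt_const hr

theorem ruscheweyh_inequality_at_boundary
    (a b : ℝ) (ha : 0 < a)
    (c s : ℂ) (hs : s = (a : ℂ) + (b : ℂ) * Complex.I)
    (M : ℝ) (hM : 0 ≤ M)
    (f : ℂ → ℂ)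
    (hf : AnalyticOnNhd ℂ f (ball 0 1)) (hf0 : f 0 = 0) (hf'0 : deriv f 0 = 1)
    (hf' : ∀ z ∈ ball (0 : ℂ) 1, deriv f z ≠ 0)
    (hfz : ∀ z ∈ ball (0 : ℂ) 1 \ {0}, f z ≠ 0)
    (hineq : ∀ z ∈ ball (0 : ℂ) 1 \ {0},
      ‖c * (‖z‖ : ℂ) ^ 2 + s
        - (a : ℂ) * (1 - (‖z‖ : ℂ) ^ 2) *
          (s * (1 + z * deriv (deriv f) z / deriv f z)
            + (1 - s) * (z * deriv f z / f z))‖ ≤ M) :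
    ‖c + s‖ ≤ M :=
  ruscheweyh_inequality_at_boundary_general a c s M f hf hf0 hf'0 hf' hfz hineq
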